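/- Let G̃ be the group with presentation on generators Γ₁, Γ₂, Γ₃, Γ₄, Γ₅ and relations: ΓᵢΓⱼΓᵢ = ΓⱼΓᵢΓⱼ for (i,j) ∈ {(1,2),(1,3),(2,3),(2,4),(2,5),(4,5)}; ΓᵢΓⱼ = ΓⱼΓᵢ for (i,j) ∈ {(1,4),(1,5),(3,4),(3,5)}; Γ₁ commutes with both Γ₃Γ₂Γ₃⁻¹ and Γ₃⁻¹Γ₂Γ₃; Γ₄ commutes with both Γ₅Γ₂Γ₅⁻¹ and Γ₅⁻¹Γ₂Γ₅. Then in G̃ the identity Γ₄⁻¹Γ₂Γ₅⁻²Γ₄Γ₅²Γ₂⁻¹Γ₄ = Γ₂ holds. -/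

import Mathlib

open scoped commutatorElement

/-- The defining relations of the group `G̃` on generators `Γ₁, …, Γ₅` (indexed by
`Fin 5`, where index `i` corresponds to `Γᵢ₊₁`): braid relations `ΓᵢΓⱼΓᵢ = ΓⱼΓᵢΓⱼ` for
`(i,j) ∈ {(1,2),(1,3),(2,3),(2,4),(2,5),(4,5)}`, commutation `ΓᵢΓⱼ = ΓⱼΓᵢ` for
`(i,j) ∈ {(1,4),(1,5),(3,4),(3,5)}`, `Γ₁` commutes with `Γ₃Γ₂Γ₃⁻¹` and `Γ₃⁻¹Γ₂Γ₃`,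
and `Γ₄` commutes with `Γ₅Γ₂Γ₅⁻¹` and `Γ₅⁻¹Γ₂Γ₅`. -/
def tildeRels : Set (FreeGroup (Fin 5)) :=
  let Γ : Fin 5 → FreeGroup (Fin 5) := FreeGroup.of
  { Γ 0 * Γ 1 * Γ 0 * (Γ 1 * Γ 0 * Γ 1)⁻¹,
    Γ 0 * Γ 2 * Γ 0 * (Γ 2 * Γ 0 * Γ 2)⁻¹,
    Γ 1 * Γ 2 * Γ 1 * (Γ 2 * Γ 1 * Γ 2)⁻¹,
    Γ 1 * Γ 3 * Γ 1 * (Γ 3 * Γ 1 * Γ 3)⁻¹,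
    Γ 1 * Γ 4 * Γ 1 * (Γ 4 * Γ 1 * Γ 4)⁻¹,
    Γ 3 * Γ 4 * Γ 3 * (Γ 4 * Γ 3 * Γ 4)⁻¹,
    ⁅Γ 0, Γ 3⁆, ⁅Γ 0, Γ 4⁆, ⁅Γ 2, Γ 3⁆, ⁅Γ 2, Γ 4⁆,
    ⁅Γ 0, Γ 2 * Γ 1 * (Γ 2)⁻¹⁆, ⁅Γ 0, (Γ 2)⁻¹ * Γ 1 * Γ 2⁆,
    ⁅Γ 3, Γ 4 * Γ 1 * (Γ 4)⁻¹⁆, ⁅Γ 3, (Γ 4)⁻¹ * Γ 1 * Γ 4⁆ }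

/-- The group `G̃` (the quotient `B̃₆` of the braid group `B₆`). -/
abbrev Gtilde : Type := PresentedGroup tildeRels

/-- The generators `Γ₁, …, Γ₅` of `G̃` (index `i : Fin 5` corresponds to `Γᵢ₊₁`). -/
def γ (i : Fin 5) : Gtilde := PresentedGroup.of i

/-!
The left-hand side is the conjugate of `Γ₄` by `Γ₄⁻¹Γ₂Γ₅⁻²`. Transported by the braid relation
`Γ₂Γ₅Γ₂ = Γ₅Γ₂Γ₅`, the two commutation relations of `Γ₄` say that `Γ₅⁻¹Γ₄Γ₅` commutes with `Γ₂`
and `Γ₂⁻¹Γ₄Γ₂` commutes with `Γ₅`; with these the conjugate collapses to `Γ₂⁻¹Γ₄Γ₂` conjugated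
by `Γ₄⁻¹`, which is `Γ₂` by the braid relation `Γ₂Γ₄Γ₂ = Γ₄Γ₂Γ₄`.
-/

section BraidRelation

variable {G : Type*} [Group G] {a b c : G}

theorem inv_mul_mul_eq_mul_mul_inv_of_braid (h : b * c * b = c * b * c) :
    c⁻¹ * b * c = b * c * b⁻¹ := by
  rw [eq_mul_inv_iff_mul_eq, mul_assoc, mul_assoc, inv_mul_eq_iff_eq_mul, ← mul_assoc, h,
    mul_assoc]

theorem conj_eq_of_braid_of_commute (hab : a * b * a = b * a * b) (hbc : b * c * b = c * b * c)
    (h₁ : Commute a (c * b * c⁻¹)) (h₂ : Commute a (c⁻¹ * b * c)) :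
    a⁻¹ * b * (c ^ 2)⁻¹ * a * c ^ 2 * b⁻¹ * a = b := by
  have hcb : b⁻¹ * c * b = c * b * c⁻¹ := inv_mul_mul_eq_mul_mul_inv_of_braid hbc.symm
  have hd : Commute (c⁻¹ * a * c) b := by simpa [mul_assoc] using h₁.conj c⁻¹
  have he : Commute (b⁻¹ * a * b) c := by
    rw [inv_mul_mul_eq_mul_mul_inv_of_braid hbc] at h₂
    simpa [mul_assoc] using h₂.conj b⁻¹
  calc a⁻¹ * b * (c ^ 2)⁻¹ * a * c ^ 2 * b⁻¹ * a
      = a⁻¹ * c⁻¹ * (c * b * c⁻¹) * (c⁻¹ * a * c) * (c * b * c⁻¹)⁻¹ * c * a := by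
        rw [sq]; group
    _ = a⁻¹ * c⁻¹ * b⁻¹ * c * (b * (c⁻¹ * a * c) * b⁻¹) * c⁻¹ * b * c * a := by
        rw [← hcb]; group
    _ = a⁻¹ * (c⁻¹ * (b⁻¹ * a * b) * c) * a := by rw [hd.symm.mul_inv_cancel]; group
    _ = a⁻¹ * (a * b * a⁻¹) * a := by
        rw [he.symm.inv_mul_cancel, inv_mul_mul_eq_mul_mul_inv_of_braid hab]
    _ = b := by group

end BraidRelation

namespace PresentedGroup

variable {α : Type*} {rels : Set (FreeGroup α)}

theorem of_braid_of_mem {i j : α}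
    (h : .of i * .of j * .of i * (.of j * .of i * .of j)⁻¹ ∈ rels) :
    (of i * of j * of i : PresentedGroup rels) = of j * of i * of j := by
  have h' := mk_eq_mk_of_mul_inv_mem h
  simp only [map_mul] at h'
  exact h'

theorem commute_of_commutatorElement_mem {x y : FreeGroup α} (h : ⁅x, y⁆ ∈ rels) :
    Commute (mk rels x) (mk rels y) := by
  rw [commute_iff_eq, ← commutatorElement_eq_one_iff_mul_comm, ← map_commutatorElement]
  exact one_of_mem h

end PresentedGroup

/-- In `G̃`, the identity `Γ₄⁻¹Γ₂Γ₅⁻²Γ₄Γ₅²Γ₂⁻¹Γ₄ = Γ₂` holds. -/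
theorem stmt9 :
    (γ 3)⁻¹ * γ 1 * (γ 4 ^ 2)⁻¹ * γ 3 * γ 4 ^ 2 * (γ 1)⁻¹ * γ 3 = γ 1 := by
  have h₁ := PresentedGroup.commute_of_commutatorElement_mem (rels := tildeRels)
    (x := .of 3) (y := .of 4 * .of 1 * (.of 4)⁻¹) (by simp [tildeRels])
  have h₂ := PresentedGroup.commute_of_commutatorElement_mem (rels := tildeRels)
    (x := .of 3) (y := (.of 4)⁻¹ * .of 1 * .of 4) (by simp [tildeRels])
  simp only [map_mul, map_inv] at h₁ h₂
  exact conj_eq_of_braid_of_commute (PresentedGroup.of_braid_of_mem (by simp [tildeRels])).symm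
    (PresentedGroup.of_braid_of_mem (by simp [tildeRels])) h₁ h₂
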